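/- arXiv:2101.04534 — 2 statements merged into one kernel-verified Lean document; each statement's English description precedes it below -/
import Mathlib

section
/- The range of the homomorphism α : F₃ → F (determined by α(yₙ) = xₙ·xₙ₊₁) equals the subgroup of F generated by the three elements x₀x₁, x₁x₂ and x₂x₃; i.e., the oriented Thompson group 𝐹⃗ = α(F₃) is generated by x₀x₁, x₁x₂, x₂x₃. -/
/-- Relators of Thompson's group `F`: `xₙ·xₖ·xₙ₊₁⁻¹·xₖ⁻¹` for `k < n`. -/
def thompsonRels : Set (FreeGroup ℕ) :=
  {r | ∃ n k : ℕ, k < n ∧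
    r = FreeGroup.of n * FreeGroup.of k * (FreeGroup.of (n + 1))⁻¹ * (FreeGroup.of k)⁻¹}

/-- Thompson's group `F` as a presented group. -/
abbrev ThompsonF : Type := PresentedGroup thompsonRels

/-- The generator `xᵢ` of Thompson's group `F`. -/
def x (i : ℕ) : ThompsonF := PresentedGroup.of i

/-- Relators of the Brown–Thompson group `F₃`: `y_q·y_p·y_{q+2}⁻¹·y_p⁻¹` for `p < q`. -/
def brownRels : Set (FreeGroup ℕ) :=
  {r | ∃ q p : ℕ, p < q ∧
    r = FreeGroup.of q * FreeGroup.of p * (FreeGroup.of (q + 2))⁻¹ * (FreeGroup.of p)⁻¹}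

/-- The Brown–Thompson group `F₃` as a presented group. -/
abbrev BrownF3 : Type := PresentedGroup brownRels

/-- The generator `yᵢ` of the Brown–Thompson group `F₃`. -/
def y (i : ℕ) : BrownF3 := PresentedGroup.of i

/-- The defining relation of Thompson's group `F`: `xₙ·xₖ = xₖ·xₙ₊₁` for `k < n`. -/
lemma xrel {k n : ℕ} (h : k < n) : x n * x k = x k * x (n + 1) := by
  have h1 : (PresentedGroup.mk thompsonRels)
      (FreeGroup.of n * FreeGroup.of k * (FreeGroup.of (n + 1))⁻¹ * (FreeGroup.of k)⁻¹) = 1 := by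
    apply (QuotientGroup.eq_one_iff _).2
    exact Subgroup.subset_normalClosure ⟨n, k, h, rfl⟩
  have h2 : x n * x k * (x (n+1))⁻¹ * (x k)⁻¹ = 1 := by
    simpa [x, PresentedGroup.of] using h1
  exact mul_inv_eq_iff_eq_mul.mp (mul_inv_eq_one.mp h2)

/-- Conjugating `xₙ·xₙ₊₁` (for `n ≥ 1`) by `(x₀·x₁)⁻¹` gives `xₙ₊₂·xₙ₊₃`. -/
lemma xcomm {n : ℕ} (h : 1 ≤ n) :
    (x n * x (n+1)) * (x 0 * x 1) = (x 0 * x 1) * (x (n+2) * x (n+3)) := by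
  calc (x n * x (n+1)) * (x 0 * x 1)
      = x n * (x (n+1) * x 0) * x 1 := by group
    _ = x n * (x 0 * x (n+2)) * x 1 := by rw [xrel (Nat.succ_pos n)]
    _ = (x n * x 0) * (x (n+2) * x 1) := by group
    _ = (x 0 * x (n+1)) * (x 1 * x (n+3)) := by
        rw [xrel (by omega : 0 < n), xrel (by omega : 1 < n + 2)]
    _ = x 0 * (x (n+1) * x 1) * x (n+3) := by group
    _ = x 0 * (x 1 * x (n+2)) * x (n+3) := by rw [xrel (by omega : 1 < n + 1)]
    _ = (x 0 * x 1) * (x (n+2) * x (n+3)) := by group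

/-- The range of `α : F₃ → F` (with `α(yₙ) = xₙ·xₙ₊₁`) equals the subgroup of `F`
generated by `x₀x₁`, `x₁x₂` and `x₂x₃`. -/
theorem alpha_range_eq_closure (α : BrownF3 →* ThompsonF)
    (hα : ∀ n : ℕ, α (y n) = x n * x (n + 1)) :
    α.range = Subgroup.closure ({x 0 * x 1, x 1 * x 2, x 2 * x 3} : Set ThompsonF) := by
  set S : Set ThompsonF := {x 0 * x 1, x 1 * x 2, x 2 * x 3} with hS
  have key : ∀ n : ℕ, x n * x (n+1) ∈ Subgroup.closure S := by
    intro n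
    induction n using Nat.strong_induction_on with
    | _ n ih =>
      match n, ih with
      | 0, _ => exact Subgroup.subset_closure (by simp [hS])
      | 1, _ => exact Subgroup.subset_closure (by simp [hS])
      | 2, _ => exact Subgroup.subset_closure (by simp [hS])
      | (m+3), ih =>
        have hm := ih (m+1) (by omega)
        have h0 : x 0 * x 1 ∈ Subgroup.closure S := Subgroup.subset_closure (by simp [hS])
        have heq : x (m+3) * x (m+3+1) =
            (x 0 * x 1)⁻¹ * ((x (m+1) * x (m+2)) * (x 0 * x 1)) := by
          rw [xcomm (by omega : 1 ≤ m + 1)]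
          group
        rw [heq]
        exact mul_mem (inv_mem h0) (mul_mem hm h0)
  apply le_antisymm
  · rw [MonoidHom.range_eq_map, ← PresentedGroup.closure_range_of brownRels,
      MonoidHom.map_closure, Subgroup.closure_le]
    rintro _ ⟨_, ⟨n, rfl⟩, rfl⟩
    rw [show (PresentedGroup.of n : BrownF3) = y n from rfl, hα]
    exact key n
  · rw [Subgroup.closure_le]
    rintro g (rfl | rfl | rfl)
    · exact ⟨y 0, by rw [hα]⟩
    · exact ⟨y 1, by rw [hα]⟩
    · exact ⟨y 2, by rw [hα]⟩
end

section
/- For every element g of the range of α (i.e., every g in the oriented Thompson group 𝐹⃗ = α(F₃) ≤ F), there exist elements g₁, g₂ belonging to α(F₃) ∩ F₊ such that g = g₁ · g₂⁻¹. -/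
/-- The positive monoid `F₊`: submonoid of `F` generated by the `xᵢ`. -/
def Fpos : Submonoid ThompsonF := Submonoid.closure (Set.range x)

/-- The positive monoid in `F₃`. -/
def Ypos : Submonoid BrownF3 := Submonoid.closure (Set.range y)

lemma y_mem_Ypos (i : ℕ) : y i ∈ Ypos :=
  Submonoid.subset_closure ⟨i, rfl⟩

lemma brown_rel {p q : ℕ} (h : p < q) : y q * y p = y p * y (q + 2) := by
  have hr : (FreeGroup.of q * FreeGroup.of p * (FreeGroup.of (q + 2))⁻¹ * (FreeGroup.of p)⁻¹ :
      FreeGroup ℕ) ∈ brownRels := ⟨q, p, h, rfl⟩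
  have h1 : PresentedGroup.mk brownRels
      (FreeGroup.of q * FreeGroup.of p * (FreeGroup.of (q + 2))⁻¹ * (FreeGroup.of p)⁻¹) = 1 :=
    (QuotientGroup.eq_one_iff _).mpr (Subgroup.subset_normalClosure hr)
  have h2 : y q * y p * (y (q + 2))⁻¹ * (y p)⁻¹ = 1 := by
    simpa [y, PresentedGroup.of, map_mul, map_inv] using h1
  rw [← mul_inv_eq_one, mul_inv_rev]
  group at h2 ⊢
  exact h2

/-- single generator swap -/
lemma swap_gen (i j : ℕ) : ∃ a b : BrownF3, a ∈ Ypos ∧ b ∈ Ypos ∧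
    (y i)⁻¹ * y j = a * b⁻¹ ∧ (a = 1 ∨ ∃ k, a = y k) := by
  rcases lt_trichotomy i j with h | h | h
  · refine ⟨y (j + 2), y i, y_mem_Ypos _, y_mem_Ypos _, ?_, Or.inr ⟨_, rfl⟩⟩
    have := brown_rel h
    rw [inv_mul_eq_iff_eq_mul, ← mul_assoc, ← this]
    group
  · subst h; exact ⟨1, 1, one_mem _, one_mem _, by simp, Or.inl rfl⟩
  · refine ⟨y j, y (i + 2), y_mem_Ypos _, y_mem_Ypos _, ?_, Or.inr ⟨_, rfl⟩⟩
    have := brown_rel h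
    rw [inv_mul_eq_iff_eq_mul, ← mul_assoc, this]
    group

/-- `q⁻¹ * (single generator)` rewriting. -/
lemma swap_pos_gen : ∀ q ∈ Ypos, ∀ j : ℕ, ∃ a b : BrownF3, a ∈ Ypos ∧ b ∈ Ypos ∧
    q⁻¹ * y j = a * b⁻¹ ∧ (a = 1 ∨ ∃ k, a = y k) := by
  intro q hq
  induction hq using Submonoid.closure_induction with
  | mem z hz =>
    obtain ⟨i, rfl⟩ := hz
    intro j; exact swap_gen i j
  | one =>
    intro j
    exact ⟨y j, 1, y_mem_Ypos _, one_mem _, by simp, Or.inr ⟨_, rfl⟩⟩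
  | mul q₁ q₂ hq₁ hq₂ ih₁ ih₂ =>
    intro j
    obtain ⟨a, b, ha, hb, heq, hcase⟩ := ih₁ j
    rcases hcase with rfl | ⟨k, rfl⟩
    · refine ⟨1, b * q₂, one_mem _, mul_mem hb hq₂, ?_, Or.inl rfl⟩
      rw [mul_inv_rev, mul_assoc, heq]
      group
    · obtain ⟨c, d, hc, hd, heq2, hcase2⟩ := ih₂ k
      refine ⟨c, b * d, hc, mul_mem hb hd, ?_, hcase2⟩
      rw [mul_inv_rev, mul_assoc, heq, ← mul_assoc, mul_assoc q₂⁻¹, ← mul_assoc q₂⁻¹, heq2]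
      group

/-- Ore-type lemma: `q⁻¹ * r = r' * q'⁻¹` with positives. -/
lemma ore : ∀ r ∈ Ypos, ∀ q ∈ Ypos, ∃ r' q' : BrownF3, r' ∈ Ypos ∧ q' ∈ Ypos ∧
    q⁻¹ * r = r' * q'⁻¹ := by
  intro r hr
  induction hr using Submonoid.closure_induction with
  | mem z hz =>
    obtain ⟨j, rfl⟩ := hz
    intro q hq
    obtain ⟨a, b, ha, hb, heq, _⟩ := swap_pos_gen q hq j
    exact ⟨a, b, ha, hb, heq⟩
  | one => intro q hq; exact ⟨1, q, one_mem _, hq, by simp⟩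
  | mul r₁ r₂ hr₁ hr₂ ih₁ ih₂ =>
    intro q hq
    obtain ⟨a, b, ha, hb, heq1⟩ := ih₁ q hq
    obtain ⟨c, d, hc, hd, heq2⟩ := ih₂ b hb
    refine ⟨a * c, d, mul_mem ha hc, hd, ?_⟩
    rw [← mul_assoc, heq1, mul_assoc, heq2, mul_assoc]

/-- Every element of `F₃` is positive times inverse positive. -/
lemma brown_decomp (g : BrownF3) : ∃ p q : BrownF3, p ∈ Ypos ∧ q ∈ Ypos ∧ g = p * q⁻¹ := by
  have hg : g ∈ Subgroup.closure (Set.range (y : ℕ → BrownF3)) := by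
    have := PresentedGroup.closure_range_of brownRels
    rw [show (Set.range (y : ℕ → BrownF3)) = Set.range (PresentedGroup.of) from rfl, this]
    trivial
  induction hg using Subgroup.closure_induction with
  | mem z hz => obtain ⟨i, rfl⟩ := hz; exact ⟨y i, 1, y_mem_Ypos _, one_mem _, by simp⟩
  | one => exact ⟨1, 1, one_mem _, one_mem _, by simp⟩
  | mul g₁ g₂ _ _ ih₁ ih₂ =>
    obtain ⟨p₁, q₁, hp₁, hq₁, rfl⟩ := ih₁
    obtain ⟨p₂, q₂, hp₂, hq₂, rfl⟩ := ih₂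
    obtain ⟨r', q', hr', hq', heq⟩ := ore p₂ hp₂ q₁ hq₁
    refine ⟨p₁ * r', q₂ * q', mul_mem hp₁ hr', mul_mem hq₂ hq', ?_⟩
    rw [mul_assoc, ← mul_assoc q₁⁻¹, heq]
    group
  | inv g _ ih =>
    obtain ⟨p, q, hp, hq, rfl⟩ := ih
    exact ⟨q, p, hq, hp, by group⟩

/-- Every element of the oriented Thompson group `𝐹⃗ = α(F₃)` is a product `g₁·g₂⁻¹`
with `g₁, g₂ ∈ α(F₃) ∩ F₊ = 𝐹⃗₊`. -/
theorem oriented_positive_decomposition (α : BrownF3 →* ThompsonF)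
    (hα : ∀ n : ℕ, α (y n) = x n * x (n + 1)) :
    ∀ g ∈ α.range, ∃ g₁ g₂ : ThompsonF,
      (g₁ ∈ α.range ∧ g₁ ∈ Fpos) ∧ (g₂ ∈ α.range ∧ g₂ ∈ Fpos) ∧ g = g₁ * g₂⁻¹ := by
  have key : ∀ p ∈ Ypos, α p ∈ Fpos := by
    intro p hp
    induction hp using Submonoid.closure_induction with
    | mem z hz =>
      obtain ⟨i, rfl⟩ := hz
      rw [hα]
      exact mul_mem (Submonoid.subset_closure ⟨i, rfl⟩) (Submonoid.subset_closure ⟨i + 1, rfl⟩)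
    | one => simp [one_mem]
    | mul a b _ _ iha ihb => rw [map_mul]; exact mul_mem iha ihb
  rintro g ⟨h, rfl⟩
  obtain ⟨p, q, hp, hq, rfl⟩ := brown_decomp h
  exact ⟨α p, α q, ⟨⟨p, rfl⟩, key p hp⟩, ⟨⟨q, rfl⟩, key q hq⟩, by rw [map_mul, map_inv]⟩
end
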